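/- arXiv:2602.02818 — 3 statements merged into one kernel-verified Lean document; each statement's English description precedes it below -/
import Mathlib

section
/- Assume Φ̂(k₀) ≠ 0 for some k₀ ≠ 0 and Φ̂(k) ≠ Φ̂(k₀) for all k ≠ ±k₀. Set c₀ = −a/Φ̂(k₀). Then the kernel of L_{c₀} restricted to the space X of even, mean-zero H^{s+2}(𝕋^d) functions is one-dimensional, spanned by v₀(y) = cos(k₀·y). -/
/-- `|k|²` for a frequency `k ∈ ℤ^d`. -/
noncomputable def freqSq (d : ℕ) (k : Fin d → ℤ) : ℝ := ∑ i, ((k i : ℝ))^2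

lemma freqSq_ne_zero (d : ℕ) (k : Fin d → ℤ) (hk : k ≠ 0) : freqSq d k ≠ 0 := by
  intro h
  apply hk
  funext i
  have h0 : ∀ i ∈ Finset.univ, (0:ℝ) ≤ ((k i : ℝ))^2 := fun i _ => sq_nonneg _
  have := (Finset.sum_eq_zero_iff_of_nonneg h0).mp h i (Finset.mem_univ i)
  have : (k i : ℝ) = 0 := by
    have := sq_eq_zero_iff.mp this
    exact this
  exact_mod_cast this

/-- Under hypothesis (H) (`Φ̂(k₀) ≠ 0` for some `k₀ ≠ 0` and `Φ̂(k) ≠ Φ̂(k₀)` for all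
`k ≠ ±k₀`), with `c₀ = -a/Φ̂(k₀)`, the kernel of `L_{c₀}` (symbol
`m(k) = -|k|²(a + c₀ Φ̂(k))`) restricted to the space of even, real-valued, mean-zero
functions is one-dimensional, spanned by `v₀(y) = cos(k₀·y)` (Fourier coefficients
supported on `{±k₀}` with equal real value there). -/
theorem kernel_of_linearization_one_dimensional
    (d : ℕ) (a : ℝ) (ha : 0 < a)
    (Φhat : (Fin d → ℤ) → ℝ) (hΦeven : ∀ k, Φhat (-k) = Φhat k)
    (k₀ : Fin d → ℤ) (hk₀ : k₀ ≠ 0) (hΦk₀ : Φhat k₀ ≠ 0)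
    (hH : ∀ k, k ≠ k₀ → k ≠ -k₀ → Φhat k ≠ Φhat k₀) :
    ∀ uhat : (Fin d → ℤ) → ℂ,
      (uhat 0 = 0 ∧ (∀ k, uhat (-k) = uhat k) ∧
        (∀ k, uhat (-k) = starRingEnd ℂ (uhat k)) ∧
        (∀ k, (freqSq d k : ℂ) *
          ((a : ℂ) + ((-a / Φhat k₀ : ℝ) : ℂ) * ((Φhat k : ℝ) : ℂ)) * uhat k = 0))
      ↔ ∃ t : ℝ, uhat = fun k => if k = k₀ ∨ k = -k₀ then (t : ℂ) else 0 := by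
  intro uhat
  have hsymb : (a : ℂ) + ((-a / Φhat k₀ : ℝ) : ℂ) * ((Φhat k₀ : ℝ) : ℂ) = 0 := by
    have : a + (-a / Φhat k₀) * Φhat k₀ = 0 := by
      field_simp
      ring
    exact_mod_cast this
  constructor
  · rintro ⟨h0, heven, hconj, heq⟩
    refine ⟨(uhat k₀).re, ?_⟩
    have hreal : uhat k₀ = ((uhat k₀).re : ℂ) := by
      have : (starRingEnd ℂ) (uhat k₀) = uhat k₀ := by
        rw [← hconj k₀, heven k₀]
      exact (Complex.conj_eq_iff_re.mp this).symm
    funext k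
    by_cases hk : k = k₀ ∨ k = -k₀
    · rw [if_pos hk]
      rcases hk with rfl | rfl
      · exact hreal
      · rw [heven k₀]; exact hreal
    · rw [if_neg hk]
      push_neg at hk
      by_cases hk0 : k = 0
      · subst hk0; exact h0
      · have h := heq k
        have h1 : (freqSq d k : ℂ) ≠ 0 := by
          exact_mod_cast freqSq_ne_zero d k hk0
        have h2 : (a : ℂ) + ((-a / Φhat k₀ : ℝ) : ℂ) * ((Φhat k : ℝ) : ℂ) ≠ 0 := by
          have hr : a + (-a / Φhat k₀) * Φhat k ≠ 0 := by
            intro habs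
            apply hH k hk.1 hk.2
            have h2' : a * Φhat k = a * Φhat k₀ := by
              field_simp at habs; linarith
            exact mul_left_cancel₀ (ne_of_gt ha) h2'
          intro habs
          apply hr
          exact_mod_cast habs
        rcases mul_eq_zero.mp h with h | h
        · exact absurd (mul_eq_zero.mp h) (by push_neg; exact ⟨h1, h2⟩)
        · exact h
  · rintro ⟨t, rfl⟩
    have hne0 : ¬ ((0 : Fin d → ℤ) = k₀ ∨ (0 : Fin d → ℤ) = -k₀) := by
      rintro (h | h)
      · exact hk₀ h.symm
      · exact hk₀ (neg_eq_zero.mp h.symm)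
    have hcond : ∀ k : Fin d → ℤ, (-k = k₀ ∨ -k = -k₀) ↔ (k = k₀ ∨ k = -k₀) := by
      intro k
      constructor
      · rintro (h | h)
        · exact Or.inr (neg_eq_iff_eq_neg.mp h)
        · exact Or.inl (neg_inj.mp h)
      · rintro (h | h)
        · exact Or.inr (by rw [h])
        · exact Or.inl (by rw [h, neg_neg])
    refine ⟨?_, ?_, ?_, ?_⟩
    · show (if ((0 : Fin d → ℤ) = k₀ ∨ (0 : Fin d → ℤ) = -k₀) then (t : ℂ) else 0) = 0
      rw [if_neg hne0]
    · intro k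
      show (if (-k = k₀ ∨ -k = -k₀) then (t : ℂ) else 0)
          = (if (k = k₀ ∨ k = -k₀) then (t : ℂ) else 0)
      rw [if_congr (hcond k) rfl rfl]
    · intro k
      show (if (-k = k₀ ∨ -k = -k₀) then (t : ℂ) else 0)
          = starRingEnd ℂ (if (k = k₀ ∨ k = -k₀) then (t : ℂ) else 0)
      rw [apply_ite (starRingEnd ℂ), Complex.conj_ofReal, map_zero,
        if_congr (hcond k) rfl rfl]
    · intro k
      show (freqSq d k : ℂ) * ((a : ℂ) + ((-a / Φhat k₀ : ℝ) : ℂ) * ((Φhat k : ℝ) : ℂ))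
          * (if (k = k₀ ∨ k = -k₀) then (t : ℂ) else 0) = 0
      by_cases hk : k = k₀ ∨ k = -k₀
      · rw [if_pos hk]
        rcases hk with rfl | rfl
        · rw [hsymb]; ring
        · rw [hΦeven k₀, hsymb]; ring
      · rw [if_neg hk]; ring
end

section
/- Under hypothesis (H) (Φ̂(k₀) ≠ 0, Φ̂(k) ≠ Φ̂(k₀) for k ≠ ±k₀) and with c₀ = −a/Φ̂(k₀), the range of L_{c₀} : X → Y equals {g ∈ Y : ĝ(k₀) = 0}, which is a closed hyperplane in Y; in particular, codim Ran(L_{c₀}) = 1. -/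
/-- Membership (via Fourier coefficients) in the space of even, real-valued, mean-zero
`H^s(𝕋^d)` functions. -/
def inEvenMeanZeroHs (d : ℕ) (s : ℝ) (g : (Fin d → ℤ) → ℂ) : Prop :=
  g 0 = 0 ∧ (∀ k, g (-k) = g k) ∧ (∀ k, g (-k) = starRingEnd ℂ (g k)) ∧
    Summable fun k => (1 + freqSq d k) ^ s * ‖g k‖ ^ 2

lemma freqSq_nonneg (d : ℕ) (k : Fin d → ℤ) : 0 ≤ freqSq d k :=
  Finset.sum_nonneg fun _ _ => sq_nonneg _

lemma freqSq_neg (d : ℕ) (k : Fin d → ℤ) : freqSq d (-k) = freqSq d k := by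
  unfold freqSq; simp

lemma one_le_freqSq {d : ℕ} {k : Fin d → ℤ} (hk : k ≠ 0) : 1 ≤ freqSq d k := by
  obtain ⟨i, hi⟩ : ∃ i, k i ≠ 0 := by
    by_contra h; push_neg at h; exact hk (funext h)
  have h1 : (1:ℝ) ≤ (k i : ℝ)^2 := by
    have h2 : (1:ℤ) ≤ (k i)^2 := by
      rcases lt_or_gt_of_ne hi with h | h
      · nlinarith
      · nlinarith
    exact_mod_cast h2
  calc (1:ℝ) ≤ (k i : ℝ)^2 := h1
    _ ≤ freqSq d k := Finset.single_le_sum (fun j _ => sq_nonneg ((k j : ℝ)))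
        (Finset.mem_univ i)

/-- Under hypothesis (H) and with `c₀ = -a/Φ̂(k₀)`, the range of
`L_{c₀} : X → Y` (symbol `m(k) = -|k|²(a + c₀Φ̂(k))`, `X` = even mean-zero `H^{s+2}`,
`Y` = even mean-zero `H^s`) equals `{g ∈ Y : ĝ(k₀) = 0}`; this constraint is proper
(there is `g ∈ Y` with `ĝ(k₀) ≠ 0`), so the range is a closed hyperplane of
codimension `1` in `Y`. -/
theorem range_of_linearization_hyperplane
    (d : ℕ) (s a : ℝ) (hs : (d : ℝ) / 2 < s) (ha : 0 < a)
    (Φhat : (Fin d → ℤ) → ℝ) (hΦeven : ∀ k, Φhat (-k) = Φhat k)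
    (hΦdecay : Filter.Tendsto Φhat Filter.cofinite (nhds 0))
    (k₀ : Fin d → ℤ) (hk₀ : k₀ ≠ 0) (hΦk₀ : Φhat k₀ ≠ 0)
    (hH : ∀ k, k ≠ k₀ → k ≠ -k₀ → Φhat k ≠ Φhat k₀) :
    (∀ g : (Fin d → ℤ) → ℂ, inEvenMeanZeroHs d s g →
      ((∃ v : (Fin d → ℤ) → ℂ, inEvenMeanZeroHs d (s + 2) v ∧
          ∀ k, g k = ((-(freqSq d k) * (a + (-a / Φhat k₀) * Φhat k) : ℝ) : ℂ) * v k)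
        ↔ g k₀ = 0))
    ∧ ∃ g : (Fin d → ℤ) → ℂ, inEvenMeanZeroHs d s g ∧ g k₀ ≠ 0 := by
  -- the symbol
  set m : (Fin d → ℤ) → ℝ := fun k => -(freqSq d k) * (a + (-a / Φhat k₀) * Φhat k) with hm
  have hm0 : m k₀ = 0 := by
    have h : a + (-a / Φhat k₀) * Φhat k₀ = 0 := by field_simp; ring
    simp [hm, h]
  have hmneg : ∀ k, m (-k) = m k := by
    intro k; simp [hm, freqSq_neg, hΦeven]
  have hmne : ∀ k, k ≠ 0 → k ≠ k₀ → k ≠ -k₀ → m k ≠ 0 := by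
    intro k hk hk1 hk2
    have hF : freqSq d k ≠ 0 := by have := one_le_freqSq hk; linarith
    have hne : a + (-a / Φhat k₀) * Φhat k ≠ 0 := by
      intro h
      apply hH k hk1 hk2
      have ha' : a ≠ 0 := ne_of_gt ha
      have h2 : a * Φhat k = a * Φhat k₀ := by
        field_simp at h
        linarith
      exact mul_left_cancel₀ ha' h2
    simp only [hm]
    exact mul_ne_zero (neg_ne_zero.mpr hF) hne
  constructor
  · intro g hg
    obtain ⟨hg0, hge, hgc, hgsum⟩ := hg
    constructor
    · rintro ⟨v, hv, hgv⟩
      have h := hgv k₀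
      rw [show (-(freqSq d k₀) * (a + (-a / Φhat k₀) * Φhat k₀) : ℝ) = 0 from hm0] at h
      simpa using h
    · intro hgk₀
      have hgk₀' : g (-k₀) = 0 := by rw [hge k₀, hgk₀]
      -- the preimage
      set v : (Fin d → ℤ) → ℂ := fun k => g k / ((m k : ℝ) : ℂ) with hv
      have hgmv : ∀ k, g k = ((m k : ℝ) : ℂ) * v k := by
        intro k
        by_cases hmk : m k = 0
        · have hgk : g k = 0 := by
            by_cases h0 : k = 0
            · rw [h0]; exact hg0
            by_cases h1 : k = k₀
            · rw [h1]; exact hgk₀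
            by_cases h2 : k = -k₀
            · rw [h2]; exact hgk₀'
            exact absurd hmk (hmne k h0 h1 h2)
          simp [hv, hgk, hmk]
        · have : ((m k : ℝ) : ℂ) ≠ 0 := by exact_mod_cast hmk
          rw [hv]; field_simp
      refine ⟨v, ?_, fun k => hgmv k⟩
      refine ⟨?_, ?_, ?_, ?_⟩
      · simp [hv, hg0]
      · intro k; simp [hv, hmneg, hge]
      · intro k
        simp only [hv, hmneg, hgc, map_div₀, Complex.conj_ofReal]
      · -- summability
        have hc₀ : (-a / Φhat k₀) ≠ 0 :=
          div_ne_zero (neg_ne_zero.mpr (ne_of_gt ha)) hΦk₀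
        have hten : Filter.Tendsto (fun k => |(-a / Φhat k₀) * Φhat k|)
            Filter.cofinite (nhds 0) := by
          have h1 := hΦdecay.const_mul (-a / Φhat k₀)
          rw [mul_zero] at h1
          simpa using h1.abs
        have hev : ∀ᶠ k in Filter.cofinite, |(-a / Φhat k₀) * Φhat k| < a / 2 := by
          have : (0:ℝ) < a / 2 := by linarith
          exact hten.eventually_lt_const this
        have hfin : {k | ¬ |(-a / Φhat k₀) * Φhat k| < a / 2}.Finite :=
          Filter.eventually_cofinite.mp hev
        set Sf : Finset (Fin d → ℤ) := hfin.toFinset ∪ {0} with hSf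
        have hbound : ∀ k ∉ Sf, (1 + freqSq d k) ^ (s + 2) * ‖v k‖ ^ 2
            ≤ 16 / a ^ 2 * ((1 + freqSq d k) ^ s * ‖g k‖ ^ 2) := by
          intro k hk
          simp only [hSf, Finset.mem_union, Finset.mem_singleton,
            Set.Finite.mem_toFinset, Set.mem_setOf_eq, not_or, not_not] at hk
          obtain ⟨hsmall, hk0⟩ := hk
          have hF1 : 1 ≤ freqSq d k := one_le_freqSq hk0
          set F := freqSq d k
          have hFpos : (0:ℝ) < 1 + F := by linarith
          have habs : a / 2 ≤ |a + (-a / Φhat k₀) * Φhat k| := by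
            have h1 := abs_add_le (a + (-a / Φhat k₀) * Φhat k)
              (-((-a / Φhat k₀) * Φhat k))
            simp only [add_neg_cancel_right, abs_neg] at h1
            rw [abs_of_pos ha] at h1
            linarith
          have hMabs : |m k| = F * |a + (-a / Φhat k₀) * Φhat k| := by
            rw [hm]
            rw [abs_mul, abs_neg, abs_of_nonneg (freqSq_nonneg d k)]
          have hM : a * (1 + F) / 4 ≤ |m k| := by
            rw [hMabs]; nlinarith
          have hMpos : (0:ℝ) < |m k| := by nlinarith
          have hvabs : ‖v k‖ = ‖g k‖ / |m k| := by
            rw [hv]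
            simp [norm_div]
          set A := ‖g k‖
          have key : (1 + F) ^ 2 / |m k| ^ 2 ≤ 16 / a ^ 2 := by
            rw [div_le_div_iff₀ (pow_pos hMpos 2) (pow_pos ha 2)]
            have ht : (a * (1 + F) / 4) * (a * (1 + F) / 4) ≤ |m k| * |m k| :=
              mul_self_le_mul_self (by nlinarith) hM
            nlinarith [ht]
          have hsplit : (1 + F) ^ (s + 2) = (1 + F) ^ s * (1 + F) ^ (2:ℕ) := by
            rw [Real.rpow_add hFpos, ← Real.rpow_natCast (1 + F) 2]
            norm_num
          rw [hvabs, hsplit]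
          calc (1 + F) ^ s * (1 + F) ^ (2:ℕ) * (A / |m k|) ^ 2
              = ((1 + F) ^ s * A ^ 2) * ((1 + F) ^ 2 / |m k| ^ 2) := by
                rw [div_pow]; ring
            _ ≤ ((1 + F) ^ s * A ^ 2) * (16 / a ^ 2) := by
                apply mul_le_mul_of_nonneg_left key
                positivity
            _ = 16 / a ^ 2 * ((1 + F) ^ s * A ^ 2) := by ring
        have hBsum : Summable (fun k => 16 / a ^ 2 *
            ((1 + freqSq d k) ^ s * ‖g k‖ ^ 2)) := hgsum.mul_left _
        have hBsub : Summable (fun k : {k // k ∉ Sf} => 16 / a ^ 2 *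
            ((1 + freqSq d (k : Fin d → ℤ)) ^ s * ‖g (k : Fin d → ℤ)‖ ^ 2)) :=
          hBsum.comp_injective Subtype.val_injective
        have hsub : Summable (fun k : {k // k ∉ Sf} =>
            (1 + freqSq d (k : Fin d → ℤ)) ^ (s + 2) * ‖v (k : Fin d → ℤ)‖ ^ 2) :=
          Summable.of_nonneg_of_le (fun k => by
            have h0 := freqSq_nonneg d k.1
            positivity)
            (fun k => hbound k.1 k.2) hBsub
        exact (Finset.summable_compl_iff Sf).mp hsub
  · -- a function in Y with nonzero k₀-coefficient
    refine ⟨fun k => if k = k₀ ∨ k = -k₀ then (1:ℂ) else 0, ⟨?_, ?_, ?_, ?_⟩, ?_⟩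
    · have h1 : ¬((0 : Fin d → ℤ) = k₀ ∨ (0 : Fin d → ℤ) = -k₀) := by
        rintro (h | h)
        · exact hk₀ h.symm
        · exact hk₀ (neg_eq_zero.mp h.symm)
      exact if_neg h1
    · intro k
      have : ((-k = k₀ ∨ -k = -k₀) ↔ (k = k₀ ∨ k = -k₀)) := by
        constructor
        · rintro (h | h)
          · right; rw [← h]; simp
          · left; exact neg_inj.mp h
        · rintro (h | h)
          · right; rw [h]
          · left; rw [h]; simp
      simp only [this]
    · intro k
      have : ((-k = k₀ ∨ -k = -k₀) ↔ (k = k₀ ∨ k = -k₀)) := by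
        constructor
        · rintro (h | h)
          · right; rw [← h]; simp
          · left; exact neg_inj.mp h
        · rintro (h | h)
          · right; rw [h]
          · left; rw [h]; simp
      simp only [this]
      split <;> simp
    · apply summable_of_ne_finset_zero (s := {k₀, -k₀})
      intro k hk
      simp only [Finset.mem_insert, Finset.mem_singleton, not_or] at hk
      have h1 : ¬(k = k₀ ∨ k = -k₀) := by tauto
      simp [h1]
    · simp
end

section
/- Let a > 0, z > 0, Φ(x) = 2cos(2πx), V_m = −(az/I_1(z)) I_m(z) for m ≥ 1, and c = −a(z I_2(z)/(2 I_1(z)) + 1). Then u(x) = c + Σ_{m≥1} V_m cos(2πmx) is a non-constant C^∞ periodic solution of a u_{xx} + (u (Φ * u_x))_x = 0 on 𝕋 = ℝ/ℤ. In particular, this equation does not have a unique solution. -/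
open MeasureTheory
open Real

/-- Modified Bessel function of the first kind (integer order, real argument). -/
noncomputable def besselI (m : ℕ) (z : ℝ) : ℝ :=
  ∑' j : ℕ, (z / 2) ^ (2 * j + m) / ((j.factorial : ℝ) * ((j + m).factorial : ℝ))

section Helpers

lemma besselTerm_le (z : ℝ) (hz : 0 ≤ z) (m j : ℕ) :
    (z / 2) ^ (2 * j + m) / ((j.factorial : ℝ) * ((j + m).factorial : ℝ))
      ≤ (z / 2) ^ m / m.factorial * (((z / 2) ^ 2) ^ j / j.factorial) := by
  have h1 : (z / 2) ^ (2 * j + m) = (z/2)^m * ((z/2)^2)^j := by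
    rw [← pow_mul, ← pow_add]; ring_nf
  rw [h1, div_mul_div_comm]
  have hfle : (m.factorial : ℝ) * j.factorial ≤ (j.factorial : ℝ) * ((j + m).factorial : ℝ) := by
    have h2 : (m.factorial : ℝ) ≤ ((j + m).factorial : ℝ) := by
      exact_mod_cast Nat.factorial_le (by omega)
    have hf2 : (0:ℝ) < j.factorial := by exact_mod_cast j.factorial_pos
    calc (m.factorial : ℝ) * j.factorial ≤ ((j+m).factorial : ℝ) * j.factorial :=
          mul_le_mul_of_nonneg_right h2 hf2.le
      _ = (j.factorial : ℝ) * ((j + m).factorial : ℝ) := by ring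
  exact div_le_div_of_nonneg_left (by positivity) (by positivity) hfle

lemma summable_besselTerm (z : ℝ) (hz : 0 ≤ z) (m : ℕ) :
    Summable (fun j : ℕ => (z / 2) ^ (2 * j + m) / ((j.factorial : ℝ) * ((j + m).factorial : ℝ))) := by
  apply Summable.of_nonneg_of_le (fun j => by positivity) (besselTerm_le z hz m)
  exact (Real.summable_pow_div_factorial ((z/2)^2)).mul_left _

lemma besselI_pos (z : ℝ) (hz : 0 < z) (m : ℕ) : 0 < besselI m z := by
  apply Summable.tsum_pos (summable_besselTerm z hz.le m) (fun j => by positivity) 0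
  positivity

lemma besselI_le (z : ℝ) (hz : 0 < z) (m : ℕ) :
    besselI m z ≤ (z / 2) ^ m / m.factorial * (∑' j : ℕ, ((z / 2) ^ 2) ^ j / j.factorial) := by
  rw [← tsum_mul_left]
  exact Summable.tsum_le_tsum (besselTerm_le z hz.le m) (summable_besselTerm z hz.le m)
    (((Real.summable_pow_div_factorial ((z/2)^2)).mul_left _))

set_option maxHeartbeats 1600000 in
lemma besselI_rec (z : ℝ) (hz : 0 < z) (m : ℕ) :
    z * (besselI m z - besselI (m + 2) z) = 2 * ((m:ℝ) + 1) * besselI (m + 1) z := by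
  have hs0 := summable_besselTerm z hz.le m
  have hs1 := summable_besselTerm z hz.le (m+1)
  have hs2 := summable_besselTerm z hz.le (m+2)
  unfold besselI
  rw [mul_sub, ← tsum_mul_left, ← tsum_mul_left, ← tsum_mul_left]
  rw [Summable.tsum_eq_zero_add (hs0.mul_left z), Summable.tsum_eq_zero_add (hs1.mul_left _)]
  rw [add_sub_assoc]
  congr 1
  · have hm1 : ((0+(m+1)).factorial : ℝ) = ((m:ℝ)+1) * (0+m).factorial := by
      simp only [Nat.zero_add]
      rw [Nat.factorial_succ]; push_cast; ring
    rw [hm1]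
    have hmf : ((0+m).factorial : ℝ) ≠ 0 := by exact_mod_cast (0+m).factorial_pos.ne'
    have hc : ((m:ℝ)+1) ≠ 0 := by positivity
    have he : 2*0+(m+1) = (2*0+m)+1 := by omega
    rw [he, pow_succ]
    field_simp
  · have hsum_tail : Summable (fun b : ℕ => z * ((z / 2) ^ (2 * (b+1) + m) / (((b+1).factorial : ℝ) * ((b + 1 + m).factorial : ℝ)))) := by
      exact (summable_nat_add_iff 1).mpr (hs0.mul_left z)
    rw [← Summable.tsum_sub hsum_tail (hs2.mul_left z)]
    apply tsum_congr
    intro j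
    have e1 : 2 * (j+1) + m = 2*j + m + 2 := by omega
    have e2 : 2 * j + (m + 2) = 2*j + m + 2 := by omega
    have e3 : 2 * (j+1) + (m+1) = (2*j + m + 2) + 1 := by omega
    have ha1 : (j + 1 + m = j + m + 1) := by omega
    have ha2 : (j + (m+2) = j + m + 2) := by omega
    have ha3 : (j + 1 + (m+1) = j + m + 2) := by omega
    rw [e1, e2, e3, ha1, ha2, ha3, pow_succ]
    have hj1 : ((j+1).factorial : ℝ) = ((j:ℝ)+1) * j.factorial := by
      rw [Nat.factorial_succ]; push_cast; ring
    have hb1 : ((j+m+1).factorial : ℝ) = ((j:ℝ)+m+1) * (j+m).factorial := by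
      rw [Nat.factorial_succ]; push_cast; ring
    have hb2 : ((j+m+2).factorial : ℝ) = ((j:ℝ)+m+2) * ((j:ℝ)+m+1) * (j+m).factorial := by
      rw [show j+m+2 = (j+m+1)+1 from rfl, Nat.factorial_succ]
      push_cast
      rw [hb1]; ring
    have hjf : (j.factorial : ℝ) ≠ 0 := by exact_mod_cast j.factorial_pos.ne'
    have hjmf : ((j+m).factorial : ℝ) ≠ 0 := by exact_mod_cast (j+m).factorial_pos.ne'
    have hc1 : ((j:ℝ)+1) ≠ 0 := by positivity
    have hc2 : ((j:ℝ)+m+1) ≠ 0 := by positivity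
    have hc3 : ((j:ℝ)+m+2) ≠ 0 := by positivity
    have hjp : (0:ℝ) < j.factorial := by exact_mod_cast j.factorial_pos
    have hjmp : (0:ℝ) < ((j+m).factorial:ℝ) := by exact_mod_cast (j+m).factorial_pos
    have hc1' : (0:ℝ) < (j:ℝ)+1 := by positivity
    have hc2' : (0:ℝ) < (j:ℝ)+m+1 := by positivity
    have hc3' : (0:ℝ) < (j:ℝ)+m+2 := by positivity
    have key : 1/(((j+1).factorial:ℝ) * ((j+m+1).factorial:ℝ))
        - 1/((j.factorial:ℝ) * ((j+m+2).factorial:ℝ))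
        = ((m:ℝ)+1)/(((j+1).factorial:ℝ) * ((j+m+2).factorial:ℝ)) := by
      rw [hj1, hb1, hb2]
      have d1 : (((j:ℝ)+1)*j.factorial) * ((((j:ℝ)+m+1))*((j+m).factorial:ℝ)) ≠ 0 :=
        ne_of_gt (by positivity)
      have d2 : (j.factorial:ℝ) * (((j:ℝ)+m+2) * ((j:ℝ)+m+1) * ((j+m).factorial:ℝ)) ≠ 0 :=
        ne_of_gt (by positivity)
      have d3 : (((j:ℝ)+1)*j.factorial) * (((j:ℝ)+m+2) * ((j:ℝ)+m+1) * ((j+m).factorial:ℝ)) ≠ 0 :=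
        ne_of_gt (by positivity)
      rw [div_sub_div _ _ d1 d2, div_eq_div_iff (mul_ne_zero d1 d2) d3]
      ring
    calc z * ((z/2)^(2*j+m+2) / (((j+1).factorial:ℝ) * ((j+m+1).factorial:ℝ)))
          - z * ((z/2)^(2*j+m+2) / ((j.factorial:ℝ) * ((j+m+2).factorial:ℝ)))
        = z * (z/2)^(2*j+m+2) * (1/(((j+1).factorial:ℝ) * ((j+m+1).factorial:ℝ))
            - 1/((j.factorial:ℝ) * ((j+m+2).factorial:ℝ))) := by ring
      _ = z * (z/2)^(2*j+m+2) * (((m:ℝ)+1)/(((j+1).factorial:ℝ) * ((j+m+2).factorial:ℝ))) := by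
          rw [key]
      _ = 2 * ((m:ℝ)+1) * ((z/2)^(2*j+m+2) * (z/2) / (((j+1).factorial:ℝ) * ((j+m+2).factorial:ℝ))) := by
          ring

lemma hasDerivAt_cos_lin (A b φ x : ℝ) :
    HasDerivAt (fun y => A * Real.cos (b * y + φ)) (A * b * -Real.sin (b * x + φ)) x := by
  have h1 : HasDerivAt (fun y : ℝ => b * y + φ) b x := by
    simpa using ((hasDerivAt_id x).const_mul b).add_const φ
  have h2 := (h1.cos).const_mul A
  refine h2.congr_deriv ?_
  ring

lemma hasDerivAt_cos_lin0 (A b x : ℝ) :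
    HasDerivAt (fun y => A * Real.cos (b * y)) (A * b * -Real.sin (b * x)) x := by
  have h := hasDerivAt_cos_lin A b 0 x
  simpa using h

lemma hasDerivAt_sin_lin (A b x : ℝ) :
    HasDerivAt (fun y => A * Real.sin (b * y)) (A * b * Real.cos (b * x)) x := by
  have h1 : HasDerivAt (fun y : ℝ => b * y) b x := by
    simpa using (hasDerivAt_id x).const_mul b
  have h2 := (h1.sin).const_mul A
  refine h2.congr_deriv ?_
  ring

lemma hasDerivAt_neg_sin_lin (A b x : ℝ) :
    HasDerivAt (fun y => A * -Real.sin (b * y)) (A * b * -Real.cos (b * x)) x := by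
  have h := hasDerivAt_sin_lin (-A) b x
  have he : (fun y => -A * Real.sin (b * y)) = (fun y => A * -Real.sin (b * y)) := by
    funext y; ring
  rw [he] at h
  convert h using 1
  ring

lemma iteratedDeriv_cos_lin (A b φ : ℝ) (k : ℕ) :
    iteratedDeriv k (fun x => A * Real.cos (b * x + φ))
      = fun x => A * b ^ k * Real.cos (b * x + (φ + k * (π / 2))) := by
  induction k with
  | zero => simp
  | succ k ih =>
    rw [iteratedDeriv_succ, ih]
    funext x
    have h := hasDerivAt_cos_lin (A * b ^ k) b (φ + k * (π / 2)) x
    rw [h.deriv]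
    have : b * x + (φ + (k:ℝ) * (π/2)) + π/2 = b * x + (φ + ((k:ℝ)+1) * (π/2)) := by ring
    rw [← Real.cos_add_pi_div_two (b * x + (φ + k * (π / 2))), this]
    push_cast
    ring_nf

lemma contDiff_cos_lin (A b φ : ℝ) : ContDiff ℝ (⊤ : ℕ∞) (fun x => A * Real.cos (b * x + φ)) := by
  have h : ContDiff ℝ (⊤ : ℕ∞) (fun x : ℝ => b * x + φ) := by
    exact (contDiff_const.mul contDiff_id).add contDiff_const
  exact contDiff_const.mul (Real.contDiff_cos.comp h)

lemma norm_iteratedFDeriv_cos_lin_le (A b x : ℝ) (hb : 0 ≤ b) (k : ℕ) :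
    ‖iteratedFDeriv ℝ k (fun x => A * Real.cos (b * x + 0)) x‖ ≤ |A| * b ^ k := by
  rw [norm_iteratedFDeriv_eq_norm_iteratedDeriv, iteratedDeriv_cos_lin]
  rw [Real.norm_eq_abs, abs_mul, abs_mul]
  calc |A| * |b ^ k| * |Real.cos (b * x + (0 + k * (π / 2)))|
      ≤ |A| * |b ^ k| * 1 := by
        apply mul_le_mul_of_nonneg_left (Real.abs_cos_le_one _) (by positivity)
    _ = |A| * b ^ k := by rw [mul_one, abs_of_nonneg (pow_nonneg hb k)]

lemma integral_sin_nat (n : ℕ) : ∫ y in (0:ℝ)..1, Real.sin (2 * π * n * y) = 0 := by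
  rcases Nat.eq_zero_or_pos n with h | h
  · simp [h]
  · have hb : (2 * π * n) ≠ 0 := by
      have : (0:ℝ) < n := by exact_mod_cast h
      positivity
    have hder : ∀ y : ℝ, HasDerivAt (fun t => -(Real.cos (2 * π * n * t) / (2 * π * n)))
        (Real.sin (2 * π * n * y)) y := by
      intro y
      have h1 : HasDerivAt (fun t : ℝ => 2 * π * n * t) (2 * π * n) y := by
        simpa using (hasDerivAt_id y).const_mul (2 * π * n)
      have h2 := h1.cos
      have h3 := (h2.div_const (2 * π * n)).neg
      refine h3.congr_deriv ?_
      rw [mul_div_assoc, div_self hb, mul_one, neg_neg]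
    rw [intervalIntegral.integral_eq_sub_of_hasDerivAt (fun y _ => hder y)
      ((Real.continuous_sin.comp (by continuity)).intervalIntegrable 0 1)]
    have hc1 : Real.cos (2 * π * n) = 1 := by
      have : 2 * π * (n:ℝ) = (n:ℝ) * (2 * π) := by ring
      rw [this, Real.cos_nat_mul_two_pi]
    simp [hc1]

lemma integral_cos_nat (n : ℕ) : ∫ y in (0:ℝ)..1, Real.cos (2 * π * n * y) = if n = 0 then 1 else 0 := by
  rcases Nat.eq_zero_or_pos n with h | h
  · simp [h]
  · have hn0 : n ≠ 0 := by omega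
    simp only [hn0, if_false]
    have hb : (2 * π * n) ≠ 0 := by
      have : (0:ℝ) < n := by exact_mod_cast h
      positivity
    have hder : ∀ y : ℝ, HasDerivAt (fun t => Real.sin (2 * π * n * t) / (2 * π * n))
        (Real.cos (2 * π * n * y)) y := by
      intro y
      have h1 : HasDerivAt (fun t : ℝ => 2 * π * n * t) (2 * π * n) y := by
        simpa using (hasDerivAt_id y).const_mul (2 * π * n)
      have h3 := (h1.sin).div_const (2 * π * n)
      refine h3.congr_deriv ?_
      rw [mul_div_assoc, div_self hb, mul_one]
    rw [intervalIntegral.integral_eq_sub_of_hasDerivAt (fun y _ => hder y)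
      ((Real.continuous_cos.comp (by continuity)).intervalIntegrable 0 1)]
    have hs1 : Real.sin (2 * π * n) = 0 := by
      have : 2 * π * (n:ℝ) = ((2*n : ℤ) : ℝ) * π := by push_cast; ring
      rw [this, Real.sin_int_mul_pi]
    simp [hs1]

lemma summable_master (q : ℝ) (hq : 0 ≤ q) (p : ℕ) :
    Summable (fun m : ℕ => ((m:ℝ)+1)^p * q^(m+1) / ((m+1).factorial : ℝ)) := by
  refine Summable.of_nonneg_of_le (fun m => by positivity) (fun m => ?_)
    ((summable_nat_add_iff 1).mpr (Real.summable_pow_div_factorial ((2:ℝ)^p * q)))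
  · show ((m:ℝ)+1)^p * q^(m+1) / ((m+1).factorial : ℝ) ≤ ((2:ℝ)^p * q)^(m+1) / ((m+1).factorial : ℝ)
    have hfp : (0:ℝ) < ((m+1).factorial : ℝ) := by exact_mod_cast (m+1).factorial_pos
    gcongr ?_ / _
    rw [mul_pow]
    apply mul_le_mul_of_nonneg_right _ (pow_nonneg hq _)
    have h1 : ((m:ℝ)+1) ≤ (2:ℝ)^(m+1) := by
      have := Nat.lt_two_pow_self (n := m+1)
      have h2 : ((m+1 : ℕ) : ℝ) ≤ ((2^(m+1) : ℕ) : ℝ) := by exact_mod_cast this.le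
      push_cast at h2
      linarith
    calc ((m:ℝ)+1)^p ≤ ((2:ℝ)^(m+1))^p := pow_le_pow_left₀ (by positivity) h1 p
      _ = ((2:ℝ)^p)^(m+1) := by rw [← pow_mul, ← pow_mul, Nat.mul_comm]

lemma summable_of_bound (g : ℕ → ℝ) (C q : ℝ) (hq : 0 ≤ q) (p : ℕ)
    (h : ∀ m, |g m| ≤ C * (((m:ℝ)+1)^p * q^(m+1) / ((m+1).factorial : ℝ))) : Summable g := by
  apply Summable.of_norm_bounded ((summable_master q hq p).mul_left C)
  simpa [Real.norm_eq_abs] using h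

lemma trig_expand (t y : ℝ) (m : ℕ) :
    2 * Real.cos (2*π*(t - y)) * Real.sin (2*π*((m:ℝ)+1)*y)
      = Real.cos (2*π*t) * Real.sin (2*π*((m:ℝ)+2)*y) + Real.cos (2*π*t) * Real.sin (2*π*(m:ℝ)*y)
        + Real.sin (2*π*t) * Real.cos (2*π*(m:ℝ)*y) - Real.sin (2*π*t) * Real.cos (2*π*((m:ℝ)+2)*y) := by
  have h1 : 2*π*(t - y) = 2*π*t - 2*π*y := by ring
  have h2 : 2*π*((m:ℝ)+1)*y = 2*π*(m:ℝ)*y + 2*π*y := by ring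
  have h3 : 2*π*((m:ℝ)+2)*y = (2*π*(m:ℝ)*y + 2*π*y) + 2*π*y := by ring
  rw [h1, h2, h3]
  simp only [Real.cos_sub, Real.sin_add, Real.cos_add]
  linear_combination (Real.cos (2*π*t) * Real.sin (2*π*(m:ℝ)*y)
    + Real.sin (2*π*t) * Real.cos (2*π*(m:ℝ)*y)) * Real.sin_sq_add_cos_sq (2*π*y)

lemma conv_int (t : ℝ) (m : ℕ) :
    ∫ y in (0:ℝ)..1, 2 * Real.cos (2*π*(t - y)) * Real.sin (2*π*((m:ℝ)+1)*y)
      = if m = 0 then Real.sin (2*π*t) else 0 := by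
  have hint : ∀ (b : ℝ) (f : ℝ → ℝ), Continuous f → IntervalIntegrable (fun y => b * f y) MeasureTheory.volume 0 1 :=
    fun b f hf => (continuous_const.mul hf).intervalIntegrable 0 1
  have c1 : Continuous fun y => Real.sin (2*π*((m:ℝ)+2)*y) := by continuity
  have c2 : Continuous fun y => Real.sin (2*π*(m:ℝ)*y) := by continuity
  have c3 : Continuous fun y => Real.cos (2*π*(m:ℝ)*y) := by continuity
  have c4 : Continuous fun y => Real.cos (2*π*((m:ℝ)+2)*y) := by continuity
  rw [intervalIntegral.integral_congr (g := fun y =>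
      Real.cos (2*π*t) * Real.sin (2*π*((m:ℝ)+2)*y) + Real.cos (2*π*t) * Real.sin (2*π*(m:ℝ)*y)
        + Real.sin (2*π*t) * Real.cos (2*π*(m:ℝ)*y) - Real.sin (2*π*t) * Real.cos (2*π*((m:ℝ)+2)*y))
      (fun y _ => trig_expand t y m)]
  rw [intervalIntegral.integral_sub (((hint _ _ c1).add (hint _ _ c2)).add (hint _ _ c3)) (hint _ _ c4),
     intervalIntegral.integral_add ((hint _ _ c1).add (hint _ _ c2)) (hint _ _ c3),
     intervalIntegral.integral_add (hint _ _ c1) (hint _ _ c2)]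
  rw [intervalIntegral.integral_const_mul, intervalIntegral.integral_const_mul,
     intervalIntegral.integral_const_mul, intervalIntegral.integral_const_mul]
  have i1 : ∫ y in (0:ℝ)..1, Real.sin (2*π*((m:ℝ)+2)*y) = 0 := by
    simp only [show ∀ y:ℝ, 2*π*((m:ℝ)+2)*y = 2*π*((m+2:ℕ):ℝ)*y from fun y => by push_cast; ring]
    exact integral_sin_nat (m+2)
  have i2 : ∫ y in (0:ℝ)..1, Real.sin (2*π*(m:ℝ)*y) = 0 := integral_sin_nat m
  have i3 : ∫ y in (0:ℝ)..1, Real.cos (2*π*(m:ℝ)*y) = if m = 0 then 1 else 0 := integral_cos_nat m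
  have i4 : ∫ y in (0:ℝ)..1, Real.cos (2*π*((m:ℝ)+2)*y) = 0 := by
    simp only [show ∀ y:ℝ, 2*π*((m:ℝ)+2)*y = 2*π*((m+2:ℕ):ℝ)*y from fun y => by push_cast; ring]
    rw [integral_cos_nat (m+2)]
    simp
  rw [i1, i2, i3, i4]
  by_cases hm : m = 0 <;> simp [hm]

lemma trig_id2 (x : ℝ) (m : ℕ) :
    Real.cos (2*π*((m:ℝ)+1)*x) * Real.cos (2*π*x)
      - ((m:ℝ)+1) * (Real.sin (2*π*((m:ℝ)+1)*x) * Real.sin (2*π*x))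
    = -((m:ℝ)/2) * Real.cos (2*π*(m:ℝ)*x) + (((m:ℝ)+2)/2) * Real.cos (2*π*((m:ℝ)+2)*x) := by
  have h2 : 2*π*((m:ℝ)+1)*x = 2*π*(m:ℝ)*x + 2*π*x := by ring
  have h3 : 2*π*((m:ℝ)+2)*x = (2*π*(m:ℝ)*x + 2*π*x) + 2*π*x := by ring
  rw [h2, h3]
  simp only [Real.cos_add, Real.sin_add]
  linear_combination (-((m:ℝ)/2) * Real.cos (2*π*(m:ℝ)*x)) * Real.sin_sq_add_cos_sq (2*π*x)

end Helpers
section Mid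

variable {z K : ℝ} {V : ℕ → ℝ}

lemma term_bound (hVd : ∀ j m : ℕ, |V (m+1+j)| ≤ K * (z/2)^j * ((z/2)^(m+1) / ((m+1).factorial : ℝ)))
    (hz : 0 < z) (hK : 0 ≤ K) (j p : ℕ) (m : ℕ) (c0 T : ℝ) (hT : |T| ≤ 1) :
    |c0 * V (m+1+j) * (2*π*((m:ℝ)+1))^p * T|
      ≤ (|c0| * K * (z/2)^j * (2*π)^p) * (((m:ℝ)+1)^p * (z/2)^(m+1) / ((m+1).factorial : ℝ)) := by
  have hb : (0:ℝ) ≤ (2*π*((m:ℝ)+1))^p := by positivity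
  have hBd : (0:ℝ) ≤ K * (z/2)^j * ((z/2)^(m+1) / ((m+1).factorial : ℝ)) := by positivity
  rw [abs_mul, abs_mul, abs_mul, abs_of_nonneg hb]
  have step1 : |c0| * |V (m+1+j)| * (2*π*((m:ℝ)+1))^p * |T|
      ≤ |c0| * (K * (z/2)^j * ((z/2)^(m+1) / ((m+1).factorial : ℝ))) * (2*π*((m:ℝ)+1))^p * 1 := by
    have h1 : |c0| * |V (m+1+j)| ≤ |c0| * (K * (z/2)^j * ((z/2)^(m+1) / ((m+1).factorial : ℝ))) :=
      mul_le_mul_of_nonneg_left (hVd j m) (abs_nonneg c0)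
    have h2 : |c0| * |V (m+1+j)| * (2*π*((m:ℝ)+1))^p
        ≤ |c0| * (K * (z/2)^j * ((z/2)^(m+1) / ((m+1).factorial : ℝ))) * (2*π*((m:ℝ)+1))^p :=
      mul_le_mul_of_nonneg_right h1 hb
    calc |c0| * |V (m+1+j)| * (2*π*((m:ℝ)+1))^p * |T|
        ≤ |c0| * |V (m+1+j)| * (2*π*((m:ℝ)+1))^p * 1 :=
          mul_le_mul_of_nonneg_left hT (by positivity)
      _ ≤ |c0| * (K * (z/2)^j * ((z/2)^(m+1) / ((m+1).factorial : ℝ))) * (2*π*((m:ℝ)+1))^p * 1 :=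
          mul_le_mul_of_nonneg_right h2 zero_le_one
  refine step1.trans (le_of_eq ?_)
  rw [mul_one, mul_pow]
  ring

lemma summable_of_term_bound (g : ℕ → ℝ)
    (hVd : ∀ j m : ℕ, |V (m+1+j)| ≤ K * (z/2)^j * ((z/2)^(m+1) / ((m+1).factorial : ℝ)))
    (hz : 0 < z) (hK : 0 ≤ K) (j p : ℕ) (c0 : ℝ)
    (h : ∀ m, ∃ T, |T| ≤ 1 ∧ g m = c0 * V (m+1+j) * (2*π*((m:ℝ)+1))^p * T) :
    Summable g := by
  apply summable_of_bound g (|c0| * K * (z/2)^j * (2*π)^p) (z/2) (by positivity) p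
  intro m
  obtain ⟨T, hT, hg⟩ := h m
  rw [hg]
  exact term_bound hVd hz hK j p m c0 T hT

lemma summable_F (hz : 0 < z) (hK : 0 ≤ K)
    (hVd : ∀ j m : ℕ, |V (m+1+j)| ≤ K * (z/2)^j * ((z/2)^(m+1) / ((m+1).factorial : ℝ)))
    (x : ℝ) : Summable fun m : ℕ => V (m+1) * Real.cos (2*π*((m:ℝ)+1)*x) := by
  apply summable_of_term_bound _ hVd hz hK 0 0 1
  intro m
  exact ⟨Real.cos (2*π*((m:ℝ)+1)*x), Real.abs_cos_le_one _, by ring⟩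

lemma summable_D1 (hz : 0 < z) (hK : 0 ≤ K)
    (hVd : ∀ j m : ℕ, |V (m+1+j)| ≤ K * (z/2)^j * ((z/2)^(m+1) / ((m+1).factorial : ℝ)))
    (x : ℝ) : Summable fun m : ℕ => V (m+1) * (2*π*((m:ℝ)+1)) * -Real.sin (2*π*((m:ℝ)+1)*x) := by
  apply summable_of_term_bound _ hVd hz hK 0 1 1
  intro m
  refine ⟨-Real.sin (2*π*((m:ℝ)+1)*x), ?_, by ring⟩
  rw [abs_neg]; exact Real.abs_sin_le_one _

lemma summable_D2 (hz : 0 < z) (hK : 0 ≤ K)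
    (hVd : ∀ j m : ℕ, |V (m+1+j)| ≤ K * (z/2)^j * ((z/2)^(m+1) / ((m+1).factorial : ℝ)))
    (x : ℝ) : Summable fun m : ℕ =>
      V (m+1) * (2*π*((m:ℝ)+1)) * (2*π*((m:ℝ)+1)) * -Real.cos (2*π*((m:ℝ)+1)*x) := by
  apply summable_of_term_bound _ hVd hz hK 0 2 1
  intro m
  refine ⟨-Real.cos (2*π*((m:ℝ)+1)*x), ?_, by ring⟩
  rw [abs_neg]; exact Real.abs_cos_le_one _

lemma hasDerivAt_sum1 (hz : 0 < z) (hK : 0 ≤ K)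
    (hVd : ∀ j m : ℕ, |V (m+1+j)| ≤ K * (z/2)^j * ((z/2)^(m+1) / ((m+1).factorial : ℝ)))
    (x : ℝ) :
    HasDerivAt (fun x : ℝ => ∑' m : ℕ, V (m+1) * Real.cos (2*π*((m:ℝ)+1)*x))
      (∑' m : ℕ, V (m+1) * (2*π*((m:ℝ)+1)) * -Real.sin (2*π*((m:ℝ)+1)*x)) x := by
  refine hasDerivAt_tsum
    (u := fun m : ℕ => (K * (2*π)^1) * (((m:ℝ)+1)^1 * (z/2)^(m+1) / ((m+1).factorial : ℝ)))
    ((summable_master (z/2) (by positivity) 1).mul_left _)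
    (fun m y => hasDerivAt_cos_lin0 (V (m+1)) (2*π*((m:ℝ)+1)) y)
    (fun m y => ?_) (summable_F hz hK hVd 0) x
  rw [Real.norm_eq_abs]
  calc |V (m+1) * (2*π*((m:ℝ)+1)) * -Real.sin (2*π*((m:ℝ)+1)*y)|
      = |1 * V (m+1) * (2*π*((m:ℝ)+1))^1 * -Real.sin (2*π*((m:ℝ)+1)*y)| := by ring_nf
    _ ≤ (|(1:ℝ)| * K * (z/2)^0 * (2*π)^1) * (((m:ℝ)+1)^1 * (z/2)^(m+1) / ((m+1).factorial : ℝ)) := by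
        apply term_bound hVd hz hK 0 1 m 1
        rw [abs_neg]; exact Real.abs_sin_le_one _
    _ = (K * (2*π)^1) * (((m:ℝ)+1)^1 * (z/2)^(m+1) / ((m+1).factorial : ℝ)) := by norm_num

lemma hasDerivAt_sum2 (hz : 0 < z) (hK : 0 ≤ K)
    (hVd : ∀ j m : ℕ, |V (m+1+j)| ≤ K * (z/2)^j * ((z/2)^(m+1) / ((m+1).factorial : ℝ)))
    (x : ℝ) :
    HasDerivAt (fun x : ℝ => ∑' m : ℕ, V (m+1) * (2*π*((m:ℝ)+1)) * -Real.sin (2*π*((m:ℝ)+1)*x))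
      (∑' m : ℕ, V (m+1) * (2*π*((m:ℝ)+1)) * (2*π*((m:ℝ)+1)) * -Real.cos (2*π*((m:ℝ)+1)*x)) x := by
  refine hasDerivAt_tsum
    (u := fun m : ℕ => (K * (2*π)^2) * (((m:ℝ)+1)^2 * (z/2)^(m+1) / ((m+1).factorial : ℝ)))
    ((summable_master (z/2) (by positivity) 2).mul_left _)
    (fun m y => hasDerivAt_neg_sin_lin (V (m+1) * (2*π*((m:ℝ)+1))) (2*π*((m:ℝ)+1)) y)
    (fun m y => ?_) (summable_D1 hz hK hVd 0) x
  rw [Real.norm_eq_abs]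
  calc |V (m+1) * (2*π*((m:ℝ)+1)) * (2*π*((m:ℝ)+1)) * -Real.cos (2*π*((m:ℝ)+1)*y)|
      = |1 * V (m+1) * (2*π*((m:ℝ)+1))^2 * -Real.cos (2*π*((m:ℝ)+1)*y)| := by ring_nf
    _ ≤ (|(1:ℝ)| * K * (z/2)^0 * (2*π)^2) * (((m:ℝ)+1)^2 * (z/2)^(m+1) / ((m+1).factorial : ℝ)) := by
        apply term_bound hVd hz hK 0 2 m 1
        rw [abs_neg]; exact Real.abs_cos_le_one _
    _ = (K * (2*π)^2) * (((m:ℝ)+1)^2 * (z/2)^(m+1) / ((m+1).factorial : ℝ)) := by norm_num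

end Mid
section Analytic

variable {z K : ℝ} {V : ℕ → ℝ}

lemma norm_complex_sin_le (ζ : ℂ) : ‖Complex.sin ζ‖ ≤ Real.exp ‖ζ‖ := by
  rw [Complex.sin]
  have h1 : ‖(Complex.exp (-ζ * Complex.I) - Complex.exp (ζ * Complex.I)) * Complex.I / 2‖
      = ‖Complex.exp (-ζ * Complex.I) - Complex.exp (ζ * Complex.I)‖ / 2 := by
    rw [norm_div, norm_mul, Complex.norm_I, mul_one]
    norm_num
  rw [h1]
  have h2 : ‖Complex.exp (-ζ * Complex.I) - Complex.exp (ζ * Complex.I)‖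
      ≤ ‖Complex.exp (-ζ * Complex.I)‖ + ‖Complex.exp (ζ * Complex.I)‖ := norm_sub_le _ _
  have h3 : ‖Complex.exp (-ζ * Complex.I)‖ ≤ Real.exp ‖ζ‖ := by
    rw [Complex.norm_exp]
    apply Real.exp_le_exp.2
    have : (-ζ * Complex.I).re = ζ.im := by simp
    rw [this]
    exact (le_abs_self _).trans (Complex.abs_im_le_norm ζ)
  have h4 : ‖Complex.exp (ζ * Complex.I)‖ ≤ Real.exp ‖ζ‖ := by
    rw [Complex.norm_exp]
    apply Real.exp_le_exp.2
    have : (ζ * Complex.I).re = -ζ.im := by simp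
    rw [this]
    exact (neg_le_abs _).trans (Complex.abs_im_le_norm ζ)
  linarith

lemma hasDerivAt_ccos_lin (A b w : ℂ) :
    HasDerivAt (fun y => A * Complex.cos (b * y)) (A * b * -Complex.sin (b * w)) w := by
  have h1 : HasDerivAt (fun y : ℂ => b * y) b w := by
    simpa using (hasDerivAt_id w).const_mul b
  have h2 := ((Complex.hasDerivAt_cos (b * w)).comp w h1).const_mul A
  refine h2.congr_deriv ?_
  ring

lemma analytic_u (hz : 0 < z) (hK : 0 ≤ K)
    (hVd : ∀ j m : ℕ, |V (m+1+j)| ≤ K * (z/2)^j * ((z/2)^(m+1) / ((m+1).factorial : ℝ)))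
    (c : ℝ) :
    ContDiff ℝ (⊤ : ℕ∞) fun x : ℝ => c + ∑' m : ℕ, V (m+1) * Real.cos (2*π*((m:ℝ)+1)*x) := by
  -- the complex extension
  set G : ℂ → ℂ := fun w => (c:ℂ) + ∑' m : ℕ,
    (V (m+1) : ℂ) * Complex.cos (((2*π*((m:ℝ)+1) : ℝ) : ℂ) * w) with hGdef
  -- differentiability of the complex series
  have hdiffS : Differentiable ℂ (fun w : ℂ => ∑' m : ℕ,
      (V (m+1) : ℂ) * Complex.cos (((2*π*((m:ℝ)+1) : ℝ) : ℂ) * w)) := by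
    intro w₀
    set R : ℝ := ‖w₀‖ + 1 with hR
    have hRpos : 0 < R := by positivity
    have hball : w₀ ∈ Metric.ball (0:ℂ) R := by
      simp only [Metric.mem_ball, dist_zero_right, hR]
      linarith
    have h0ball : (0:ℂ) ∈ Metric.ball (0:ℂ) R := by
      simp only [Metric.mem_ball, dist_self]
      exact hRpos
    have hder := hasDerivAt_tsum_of_isPreconnected
      (u := fun m : ℕ => (K * (2*π)) *
        (((m:ℝ)+1)^1 * ((z/2) * Real.exp (2*π*R))^(m+1) / ((m+1).factorial : ℝ)))
      (g := fun m w => (V (m+1) : ℂ) * Complex.cos (((2*π*((m:ℝ)+1) : ℝ) : ℂ) * w))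
      (g' := fun m w => (V (m+1) : ℂ) * ((2*π*((m:ℝ)+1) : ℝ) : ℂ)
        * -Complex.sin (((2*π*((m:ℝ)+1) : ℝ) : ℂ) * w))
      ?_ Metric.isOpen_ball (convex_ball (0:ℂ) R).isPreconnected
      (fun m y _ => hasDerivAt_ccos_lin ((V (m+1) : ℂ)) (((2*π*((m:ℝ)+1) : ℝ) : ℂ)) y)
      ?_ h0ball ?_ hball
    · exact hder.differentiableAt
    · exact (summable_master ((z/2) * Real.exp (2*π*R)) (by positivity) 1).mul_left _
    · -- the uniform bound on the ball
      intro m w hw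
      have hwR : ‖w‖ ≤ R := by
        simp only [Metric.mem_ball, dist_zero_right] at hw
        exact hw.le
      have hb : (0:ℝ) ≤ 2*π*((m:ℝ)+1) := by positivity
      have hVm : |V (m+1)| ≤ K * ((z/2)^(m+1) / ((m+1).factorial : ℝ)) := by
        have := hVd 0 m; simpa using this
      have hnorm : ‖(V (m+1) : ℂ) * ((2*π*((m:ℝ)+1) : ℝ) : ℂ)
          * -Complex.sin (((2*π*((m:ℝ)+1) : ℝ) : ℂ) * w)‖
          ≤ |V (m+1)| * (2*π*((m:ℝ)+1)) * Real.exp (2*π*((m:ℝ)+1) * R) := by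
        rw [norm_mul, norm_mul, norm_neg]
        have e1 : ‖((V (m+1) : ℝ) : ℂ)‖ = |V (m+1)| := by
          rw [Complex.norm_real, Real.norm_eq_abs]
        have e2 : ‖((2*π*((m:ℝ)+1) : ℝ) : ℂ)‖ = 2*π*((m:ℝ)+1) := by
          rw [Complex.norm_real, Real.norm_eq_abs, abs_of_nonneg hb]
        rw [e1, e2]
        apply mul_le_mul_of_nonneg_left _ (by positivity)
        refine (norm_complex_sin_le _).trans ?_
        apply Real.exp_le_exp.2
        rw [norm_mul, e2]
        calc 2*π*((m:ℝ)+1) * ‖w‖ ≤ 2*π*((m:ℝ)+1) * R := by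
              apply mul_le_mul_of_nonneg_left hwR (by positivity)
          _ = 2*π*((m:ℝ)+1) * R := rfl
      refine hnorm.trans ?_
      have hexp : Real.exp (2*π*((m:ℝ)+1) * R) = (Real.exp (2*π*R))^(m+1) := by
        rw [← Real.exp_nat_mul]
        congr 1
        push_cast
        ring
      calc |V (m+1)| * (2*π*((m:ℝ)+1)) * Real.exp (2*π*((m:ℝ)+1) * R)
          ≤ (K * ((z/2)^(m+1) / ((m+1).factorial : ℝ))) * (2*π*((m:ℝ)+1))
              * Real.exp (2*π*((m:ℝ)+1) * R) := by
            apply mul_le_mul_of_nonneg_right (mul_le_mul_of_nonneg_right hVm hb) (by positivity)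
        _ = (K * (2*π)) * (((m:ℝ)+1)^1 * ((z/2) * Real.exp (2*π*R))^(m+1) / ((m+1).factorial : ℝ)) := by
            rw [hexp, mul_pow]
            ring
    · -- summability at the center 0
      apply Summable.of_norm
      have : ∀ m : ℕ, ‖(V (m+1) : ℂ) * Complex.cos (((2*π*((m:ℝ)+1) : ℝ) : ℂ) * 0)‖ = |V (m+1)| := by
        intro m
        rw [mul_zero, Complex.cos_zero, mul_one, Complex.norm_real, Real.norm_eq_abs]
      rw [funext this]
      apply summable_of_bound _ K (z/2) (by positivity) 0
      intro m
      have := hVd 0 m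
      simpa [abs_abs] using this
  have hdiffG : Differentiable ℂ G := by
    exact hdiffS.const_add (c:ℂ)
  have hanG : AnalyticOnNhd ℂ G Set.univ :=
    hdiffG.differentiableOn.analyticOnNhd isOpen_univ
  -- identify the real function with re ∘ G ∘ ofReal
  have hueq : (fun x : ℝ => c + ∑' m : ℕ, V (m+1) * Real.cos (2*π*((m:ℝ)+1)*x))
      = fun x : ℝ => (G ((x : ℝ) : ℂ)).re := by
    funext x
    have hterm : ∀ m : ℕ, (V (m+1) : ℂ) * Complex.cos (((2*π*((m:ℝ)+1) : ℝ) : ℂ) * ((x:ℝ):ℂ))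
        = ((V (m+1) * Real.cos (2*π*((m:ℝ)+1)*x) : ℝ) : ℂ) := by
      intro m
      rw [← Complex.ofReal_mul, ← Complex.ofReal_cos, ← Complex.ofReal_mul]
    simp only [hGdef, hterm]
    rw [← Complex.ofReal_tsum, ← Complex.ofReal_add, Complex.ofReal_re]
  rw [hueq]
  have hcomp : AnalyticOnNhd ℝ (fun x : ℝ => (G ((x : ℝ) : ℂ)).re) Set.univ := by
    have h1 : AnalyticOnNhd ℝ (fun w : ℂ => w.re) Set.univ :=
      Complex.reCLM.analyticOnNhd Set.univ
    have h2 : AnalyticOnNhd ℝ G Set.univ := hanG.restrictScalars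
    have h3 : AnalyticOnNhd ℝ (fun x : ℝ => ((x : ℝ) : ℂ)) Set.univ :=
      Complex.ofRealCLM.analyticOnNhd Set.univ
    exact (h1.comp (h2.comp h3 (Set.mapsTo_univ _ _)) (Set.mapsTo_univ _ _))
  exact hcomp.contDiff

end Analytic
section IntegralFormula

variable {z K : ℝ} {V : ℕ → ℝ}

set_option maxHeartbeats 2000000 in
lemma integral_formula (hz : 0 < z) (hK : 0 ≤ K)
    (hVd : ∀ j m : ℕ, |V (m+1+j)| ≤ K * (z/2)^j * ((z/2)^(m+1) / ((m+1).factorial : ℝ)))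
    (t : ℝ) :
    (∫ y in (0:ℝ)..1, (2 * Real.cos (2*π*(t - y)))
        * (∑' m : ℕ, V (m+1) * (2*π*((m:ℝ)+1)) * -Real.sin (2*π*((m:ℝ)+1)*y)))
      = 2*π*(-V 1) * Real.sin (2*π*t) := by
  have hcont : ∀ m : ℕ, Continuous (fun y : ℝ =>
      (2 * Real.cos (2*π*(t - y))) * (V (m+1) * (2*π*((m:ℝ)+1)) * -Real.sin (2*π*((m:ℝ)+1)*y))) := by
    intro m
    continuity
  -- move the kernel inside the sum
  have hpt : ∀ y : ℝ, (2 * Real.cos (2*π*(t - y)))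
      * (∑' m : ℕ, V (m+1) * (2*π*((m:ℝ)+1)) * -Real.sin (2*π*((m:ℝ)+1)*y))
      = ∑' m : ℕ, (2 * Real.cos (2*π*(t - y)))
          * (V (m+1) * (2*π*((m:ℝ)+1)) * -Real.sin (2*π*((m:ℝ)+1)*y)) := by
    intro y
    rw [tsum_mul_left]
  rw [intervalIntegral.integral_congr (fun y _ => hpt y)]
  rw [intervalIntegral.integral_of_le zero_le_one]
  have hFi : ∀ m : ℕ, MeasureTheory.Integrable (fun y : ℝ =>
      (2 * Real.cos (2*π*(t - y))) * (V (m+1) * (2*π*((m:ℝ)+1)) * -Real.sin (2*π*((m:ℝ)+1)*y)))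
      (MeasureTheory.volume.restrict (Set.Ioc (0:ℝ) 1)) := fun m =>
    (hcont m).integrableOn_Ioc
  have hFs : Summable (fun m : ℕ => ∫ y in Set.Ioc (0:ℝ) 1,
      ‖(2 * Real.cos (2*π*(t - y))) * (V (m+1) * (2*π*((m:ℝ)+1)) * -Real.sin (2*π*((m:ℝ)+1)*y))‖) := by
    refine Summable.of_nonneg_of_le
      (fun m => MeasureTheory.integral_nonneg (fun y => norm_nonneg _))
      (fun m => ?_)
      ((summable_master (z/2) (by positivity) 1).mul_left
        (2 * (|(1:ℝ)| * K * (z/2)^0 * (2*π)^1)))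
    · 
      have hub : ∀ y : ℝ, ‖(2 * Real.cos (2*π*(t - y)))
          * (V (m+1) * (2*π*((m:ℝ)+1)) * -Real.sin (2*π*((m:ℝ)+1)*y))‖
          ≤ (2 * (|(1:ℝ)| * K * (z/2)^0 * (2*π)^1))
              * (((m:ℝ)+1)^1 * (z/2)^(m+1) / ((m+1).factorial : ℝ)) := by
        intro y
        rw [Real.norm_eq_abs, abs_mul]
        have h1 : |2 * Real.cos (2*π*(t - y))| ≤ 2 := by
          rw [abs_mul]
          calc |(2:ℝ)| * |Real.cos (2*π*(t - y))| ≤ |(2:ℝ)| * 1 :=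
                mul_le_mul_of_nonneg_left (Real.abs_cos_le_one _) (abs_nonneg _)
            _ = 2 := by norm_num
        have h2 : |V (m+1) * (2*π*((m:ℝ)+1)) * -Real.sin (2*π*((m:ℝ)+1)*y)|
            ≤ (|(1:ℝ)| * K * (z/2)^0 * (2*π)^1)
                * (((m:ℝ)+1)^1 * (z/2)^(m+1) / ((m+1).factorial : ℝ)) := by
          have : V (m+1) * (2*π*((m:ℝ)+1)) * -Real.sin (2*π*((m:ℝ)+1)*y)
              = 1 * V (m+1) * (2*π*((m:ℝ)+1))^1 * -Real.sin (2*π*((m:ℝ)+1)*y) := by ring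
          rw [this]
          apply term_bound hVd hz hK 0 1 m 1
          rw [abs_neg]; exact Real.abs_sin_le_one _
        calc |2 * Real.cos (2*π*(t - y))| * |V (m+1) * (2*π*((m:ℝ)+1)) * -Real.sin (2*π*((m:ℝ)+1)*y)|
            ≤ 2 * ((|(1:ℝ)| * K * (z/2)^0 * (2*π)^1)
                * (((m:ℝ)+1)^1 * (z/2)^(m+1) / ((m+1).factorial : ℝ))) := by
              apply mul_le_mul h1 h2 (abs_nonneg _) (by norm_num)
          _ = (2 * (|(1:ℝ)| * K * (z/2)^0 * (2*π)^1))
              * (((m:ℝ)+1)^1 * (z/2)^(m+1) / ((m+1).factorial : ℝ)) := by ring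
      calc (∫ y in Set.Ioc (0:ℝ) 1,
          ‖(2 * Real.cos (2*π*(t - y))) * (V (m+1) * (2*π*((m:ℝ)+1)) * -Real.sin (2*π*((m:ℝ)+1)*y))‖)
          ≤ ∫ _ in Set.Ioc (0:ℝ) 1, (2 * (|(1:ℝ)| * K * (z/2)^0 * (2*π)^1))
              * (((m:ℝ)+1)^1 * (z/2)^(m+1) / ((m+1).factorial : ℝ)) := by
            apply MeasureTheory.integral_mono (hFi m).norm (MeasureTheory.integrable_const _)
            intro y
            exact hub y
        _ = (2 * (|(1:ℝ)| * K * (z/2)^0 * (2*π)^1))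
              * (((m:ℝ)+1)^1 * (z/2)^(m+1) / ((m+1).factorial : ℝ)) := by
            rw [MeasureTheory.setIntegral_const]
            simp [Real.volume_Ioc]
  rw [← MeasureTheory.integral_tsum_of_summable_integral_norm hFi hFs]
  -- compute each integral
  have hone : ∀ m : ℕ, (∫ y in Set.Ioc (0:ℝ) 1,
      (2 * Real.cos (2*π*(t - y))) * (V (m+1) * (2*π*((m:ℝ)+1)) * -Real.sin (2*π*((m:ℝ)+1)*y)))
      = (-(V (m+1) * (2*π*((m:ℝ)+1)))) * (if m = 0 then Real.sin (2*π*t) else 0) := by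
    intro m
    rw [← intervalIntegral.integral_of_le zero_le_one]
    have hc : ∀ y : ℝ, (2 * Real.cos (2*π*(t - y))) * (V (m+1) * (2*π*((m:ℝ)+1)) * -Real.sin (2*π*((m:ℝ)+1)*y))
        = (-(V (m+1) * (2*π*((m:ℝ)+1)))) * (2 * Real.cos (2*π*(t - y)) * Real.sin (2*π*((m:ℝ)+1)*y)) := by
      intro y; ring
    rw [intervalIntegral.integral_congr (fun y _ => hc y), intervalIntegral.integral_const_mul,
      conv_int t m]
  rw [tsum_congr hone]
  rw [tsum_eq_single 0 (by intro m hm; simp [hm])]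
  rw [if_pos rfl]
  push_cast
  ring

end IntegralFormula
section FinalSum

variable {z K : ℝ} {V : ℕ → ℝ}

set_option maxHeartbeats 2000000 in
lemma final_sum (a c x : ℝ) (hz : 0 < z) (hK : 0 ≤ K)
    (hVd : ∀ j m : ℕ, |V (m+1+j)| ≤ K * (z/2)^j * ((z/2)^(m+1) / ((m+1).factorial : ℝ)))
    (hrec : ∀ m : ℕ, z * (V (m+1) - V (m+3)) = 2*((m:ℝ)+2) * V (m+2))
    (hm0 : -V 1 - z * V 2 / 2 + z * c = 0) :
    a * (∑' m : ℕ, V (m+1) * (2*π*((m:ℝ)+1)) * (2*π*((m:ℝ)+1)) * -Real.cos (2*π*((m:ℝ)+1)*x))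
      + ((∑' m : ℕ, V (m+1) * (2*π*((m:ℝ)+1)) * -Real.sin (2*π*((m:ℝ)+1)*x))
            * (2*π*(a*z) * Real.sin (2*π*x))
          + (c + ∑' m : ℕ, V (m+1) * Real.cos (2*π*((m:ℝ)+1)*x))
            * (2*π*(a*z) * (2*π) * Real.cos (2*π*x))) = 0 := by
  -- summability of all the families involved
  have hT1 : Summable (fun m : ℕ =>
      a * (V (m+1) * (2*π*((m:ℝ)+1)) * (2*π*((m:ℝ)+1)) * -Real.cos (2*π*((m:ℝ)+1)*x))) := by
    apply summable_of_term_bound _ hVd hz hK 0 2 a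
    intro m
    refine ⟨-Real.cos (2*π*((m:ℝ)+1)*x), ?_, by ring⟩
    rw [abs_neg]; exact Real.abs_cos_le_one _
  have hT2 : Summable (fun m : ℕ =>
      (V (m+1) * (2*π*((m:ℝ)+1)) * -Real.sin (2*π*((m:ℝ)+1)*x)) * (2*π*(a*z) * Real.sin (2*π*x))) := by
    apply summable_of_term_bound _ hVd hz hK 0 1 (2*π*(a*z))
    intro m
    refine ⟨-(Real.sin (2*π*((m:ℝ)+1)*x) * Real.sin (2*π*x)), ?_, by ring⟩
    rw [abs_neg, abs_mul]
    exact mul_le_one₀ (Real.abs_sin_le_one _) (abs_nonneg _) (Real.abs_sin_le_one _)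
  have hT3 : Summable (fun m : ℕ =>
      (V (m+1) * Real.cos (2*π*((m:ℝ)+1)*x)) * (2*π*(a*z) * (2*π) * Real.cos (2*π*x))) := by
    apply summable_of_term_bound _ hVd hz hK 0 0 (2*π*(a*z)*(2*π))
    intro m
    refine ⟨Real.cos (2*π*((m:ℝ)+1)*x) * Real.cos (2*π*x), ?_, by ring⟩
    rw [abs_mul]
    exact mul_le_one₀ (Real.abs_cos_le_one _) (abs_nonneg _) (Real.abs_cos_le_one _)
  have hW1 : Summable (fun m : ℕ =>
      2*π*(a*z)*(2*π) * V (m+1) * (-((m:ℝ)/2)) * Real.cos (2*π*(m:ℝ)*x)) := by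
    apply summable_of_term_bound _ hVd hz hK 0 1 (2*π*(a*z))
    intro m
    have hne : ((m:ℝ)+1) ≠ 0 := by positivity
    refine ⟨(-((m:ℝ)/(2*((m:ℝ)+1)))) * Real.cos (2*π*(m:ℝ)*x), ?_, by field_simp⟩
    rw [abs_mul]
    have h1 : |(-((m:ℝ)/(2*((m:ℝ)+1))))| ≤ 1 := by
      rw [abs_neg, abs_div]
      rw [div_le_one (by positivity)]
      rw [abs_of_nonneg (by positivity : (0:ℝ) ≤ (m:ℝ)), abs_of_nonneg (by positivity)]
      linarith
    calc |(-((m:ℝ)/(2*((m:ℝ)+1))))| * |Real.cos (2*π*(m:ℝ)*x)|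
        ≤ 1 * 1 := mul_le_mul h1 (Real.abs_cos_le_one _) (abs_nonneg _) zero_le_one
      _ = 1 := by norm_num
  have hW2 : Summable (fun m : ℕ =>
      2*π*(a*z)*(2*π) * V (m+1) * (((m:ℝ)+2)/2) * Real.cos (2*π*((m:ℝ)+2)*x)) := by
    apply summable_of_term_bound _ hVd hz hK 0 1 (2*π*(a*z))
    intro m
    have hne : ((m:ℝ)+1) ≠ 0 := by positivity
    refine ⟨(((m:ℝ)+2)/(2*((m:ℝ)+1))) * Real.cos (2*π*((m:ℝ)+2)*x), ?_, by field_simp⟩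
    rw [abs_mul]
    have h1 : |(((m:ℝ)+2)/(2*((m:ℝ)+1)))| ≤ 1 := by
      rw [abs_div]
      rw [div_le_one (by positivity)]
      rw [abs_of_nonneg (by positivity : (0:ℝ) ≤ (m:ℝ)+2), abs_of_nonneg (by positivity)]
      linarith
    calc |(((m:ℝ)+2)/(2*((m:ℝ)+1)))| * |Real.cos (2*π*((m:ℝ)+2)*x)|
        ≤ 1 * 1 := mul_le_mul h1 (Real.abs_cos_le_one _) (abs_nonneg _) zero_le_one
      _ = 1 := by norm_num
  have hW1s : Summable (fun m : ℕ =>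
      2*π*(a*z)*(2*π) * V (m+2) * (-(((m:ℝ)+1)/2)) * Real.cos (2*π*((m:ℝ)+1)*x)) := by
    apply summable_of_term_bound _ hVd hz hK 1 1 (2*π*(a*z))
    intro m
    refine ⟨(-(1/2 : ℝ)) * Real.cos (2*π*((m:ℝ)+1)*x), ?_, by ring⟩
    rw [abs_mul]
    calc |(-(1/2:ℝ))| * |Real.cos (2*π*((m:ℝ)+1)*x)|
        ≤ 1 * 1 := mul_le_mul (by rw [abs_neg, abs_of_nonneg (by norm_num : (0:ℝ) ≤ 1/2)]; norm_num)
          (Real.abs_cos_le_one _) (abs_nonneg _) zero_le_one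
      _ = 1 := by norm_num
  have hXsucc : Summable (fun m : ℕ =>
      (if m + 1 = 0 then c * (2*π*(a*z) * (2*π) * Real.cos (2*π*x))
        else 2*π*(a*z)*(2*π) * V (m+1) * ((((m+1:ℕ):ℝ)+1)/2) * Real.cos (2*π*(((m+1:ℕ):ℝ)+1)*x))) := by
    apply summable_of_term_bound _ hVd hz hK 0 1 (2*π*(a*z))
    intro m
    have hne : ((m:ℝ)+1) ≠ 0 := by positivity
    refine ⟨((((m:ℝ)+2))/(2*((m:ℝ)+1))) * Real.cos (2*π*((m:ℝ)+2)*x), ?_, ?_⟩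
    · rw [abs_mul]
      have h1 : |(((m:ℝ)+2)/(2*((m:ℝ)+1)))| ≤ 1 := by
        rw [abs_div, div_le_one (by positivity)]
        rw [abs_of_nonneg (by positivity : (0:ℝ) ≤ (m:ℝ)+2), abs_of_nonneg (by positivity)]
        linarith
      calc |(((m:ℝ)+2)/(2*((m:ℝ)+1)))| * |Real.cos (2*π*((m:ℝ)+2)*x)|
          ≤ 1 * 1 := mul_le_mul h1 (Real.abs_cos_le_one _) (abs_nonneg _) zero_le_one
        _ = 1 := by norm_num
    · rw [if_neg (Nat.succ_ne_zero m)]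
      push_cast
      field_simp
      ring
  have hX : Summable (fun m : ℕ =>
      (if m = 0 then c * (2*π*(a*z) * (2*π) * Real.cos (2*π*x))
        else 2*π*(a*z)*(2*π) * V m * (((m:ℝ)+1)/2) * Real.cos (2*π*((m:ℝ)+1)*x))) := by
    apply (summable_nat_add_iff 1).mp
    exact hXsucc
  -- rewrite goal with sums of products
  rw [← tsum_mul_left, ← tsum_mul_right, add_mul, ← tsum_mul_right]
  -- key identities
  have key1 : (∑' m : ℕ, (V (m+1) * (2*π*((m:ℝ)+1)) * -Real.sin (2*π*((m:ℝ)+1)*x))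
          * (2*π*(a*z) * Real.sin (2*π*x)))
        + (∑' m : ℕ, (V (m+1) * Real.cos (2*π*((m:ℝ)+1)*x)) * (2*π*(a*z) * (2*π) * Real.cos (2*π*x)))
      = (∑' m : ℕ, 2*π*(a*z)*(2*π) * V (m+1) * (-((m:ℝ)/2)) * Real.cos (2*π*(m:ℝ)*x))
        + (∑' m : ℕ, 2*π*(a*z)*(2*π) * V (m+1) * (((m:ℝ)+2)/2) * Real.cos (2*π*((m:ℝ)+2)*x)) := by
    rw [← Summable.tsum_add hT2 hT3, ← Summable.tsum_add hW1 hW2]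
    apply tsum_congr
    intro m
    have hid := trig_id2 x m
    calc (V (m+1) * (2*π*((m:ℝ)+1)) * -Real.sin (2*π*((m:ℝ)+1)*x)) * (2*π*(a*z) * Real.sin (2*π*x))
          + (V (m+1) * Real.cos (2*π*((m:ℝ)+1)*x)) * (2*π*(a*z) * (2*π) * Real.cos (2*π*x))
        = 2*π*(a*z)*(2*π) * V (m+1)
            * (Real.cos (2*π*((m:ℝ)+1)*x) * Real.cos (2*π*x)
              - ((m:ℝ)+1) * (Real.sin (2*π*((m:ℝ)+1)*x) * Real.sin (2*π*x))) := by ring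
      _ = 2*π*(a*z)*(2*π) * V (m+1)
            * (-((m:ℝ)/2) * Real.cos (2*π*(m:ℝ)*x) + (((m:ℝ)+2)/2) * Real.cos (2*π*((m:ℝ)+2)*x)) := by
          rw [hid]
      _ = 2*π*(a*z)*(2*π) * V (m+1) * (-((m:ℝ)/2)) * Real.cos (2*π*(m:ℝ)*x)
          + 2*π*(a*z)*(2*π) * V (m+1) * (((m:ℝ)+2)/2) * Real.cos (2*π*((m:ℝ)+2)*x) := by ring
  have key3 : (∑' m : ℕ, 2*π*(a*z)*(2*π) * V (m+1) * (-((m:ℝ)/2)) * Real.cos (2*π*(m:ℝ)*x))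
      = ∑' m : ℕ, 2*π*(a*z)*(2*π) * V (m+2) * (-(((m:ℝ)+1)/2)) * Real.cos (2*π*((m:ℝ)+1)*x) := by
    rw [Summable.tsum_eq_zero_add hW1]
    have h0 : 2*π*(a*z)*(2*π) * V (0+1) * (-(((0:ℕ):ℝ)/2)) * Real.cos (2*π*((0:ℕ):ℝ)*x) = 0 := by
      simp
    rw [h0, zero_add]
    apply tsum_congr
    intro m
    push_cast
    ring
  have key4 : c * (2*π*(a*z) * (2*π) * Real.cos (2*π*x))
        + (∑' m : ℕ, 2*π*(a*z)*(2*π) * V (m+1) * (((m:ℝ)+2)/2) * Real.cos (2*π*((m:ℝ)+2)*x))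
      = ∑' m : ℕ, (if m = 0 then c * (2*π*(a*z) * (2*π) * Real.cos (2*π*x))
          else 2*π*(a*z)*(2*π) * V m * (((m:ℝ)+1)/2) * Real.cos (2*π*((m:ℝ)+1)*x)) := by
    rw [Summable.tsum_eq_zero_add hX, if_pos rfl]
    congr 1
    apply tsum_congr
    intro m
    rw [if_neg (Nat.succ_ne_zero m)]
    push_cast
    ring
  have hzero : ∀ m : ℕ,
      a * (V (m+1) * (2*π*((m:ℝ)+1)) * (2*π*((m:ℝ)+1)) * -Real.cos (2*π*((m:ℝ)+1)*x))
        + 2*π*(a*z)*(2*π) * V (m+2) * (-(((m:ℝ)+1)/2)) * Real.cos (2*π*((m:ℝ)+1)*x)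
        + (if m = 0 then c * (2*π*(a*z) * (2*π) * Real.cos (2*π*x))
            else 2*π*(a*z)*(2*π) * V m * (((m:ℝ)+1)/2) * Real.cos (2*π*((m:ℝ)+1)*x)) = 0 := by
    intro m
    cases m with
    | zero =>
      rw [if_pos rfl]
      simp only [Nat.cast_zero]
      rw [show 2*π*((0:ℝ)+1)*x = 2*π*x from by ring]
      linear_combination ((2*π)*(2*π)*a*Real.cos (2*π*x)) * hm0
    | succ m =>
      rw [if_neg (Nat.succ_ne_zero m)]
      push_cast
      linear_combination ((2*π)*(2*π)*a*(((m:ℝ)+2)/2) * Real.cos (2*π*((m:ℝ)+1+1)*x)) * hrec m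
  have key5 : (∑' m : ℕ, a * (V (m+1) * (2*π*((m:ℝ)+1)) * (2*π*((m:ℝ)+1)) * -Real.cos (2*π*((m:ℝ)+1)*x)))
        + (∑' m : ℕ, 2*π*(a*z)*(2*π) * V (m+2) * (-(((m:ℝ)+1)/2)) * Real.cos (2*π*((m:ℝ)+1)*x))
        + (∑' m : ℕ, (if m = 0 then c * (2*π*(a*z) * (2*π) * Real.cos (2*π*x))
            else 2*π*(a*z)*(2*π) * V m * (((m:ℝ)+1)/2) * Real.cos (2*π*((m:ℝ)+1)*x))) = 0 := by
    rw [← Summable.tsum_add hT1 hW1s, ← Summable.tsum_add (hT1.add hW1s) hX]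
    have := tsum_congr (L := SummationFilter.unconditional ℕ) (g := fun _ : ℕ => (0:ℝ)) hzero
    rw [this, tsum_zero]
  linarith [key1, key3, key4, key5]

end FinalSum

/-- Explicit non-uniqueness in dimension one: for `a, z > 0`, kernel `Φ(x) = 2cos(2πx)`
on `𝕋 = ℝ/ℤ`, coefficients `V_m = -(az/I_1(z)) I_m(z)` and
`c = -a(z I_2(z)/(2I_1(z)) + 1)`, the function `u(x) = c + Σ_{m≥1} V_m cos(2πmx)` is a
non-constant, `C^∞`, 1-periodic solution of `a u_xx + (u (Φ * u_x))_x = 0` (convolution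
over one period).  In particular the equation also has another (constant) solution, so
solutions are not unique. -/
theorem explicit_nonconstant_solution_one_dim (a z : ℝ) (ha : 0 < a) (hz : 0 < z) :
    let V : ℕ → ℝ := fun m => -(a * z / besselI 1 z) * besselI m z
    let c : ℝ := -a * (z * besselI 2 z / (2 * besselI 1 z) + 1)
    let u : ℝ → ℝ := fun x => c + ∑' m : ℕ, V (m + 1) * Real.cos (2 * Real.pi * (m + 1) * x)
    ContDiff ℝ (⊤ : ℕ∞) u ∧ Function.Periodic u 1 ∧ (¬ ∃ C : ℝ, ∀ x, u x = C) ∧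
    (∀ x : ℝ,
      a * deriv (deriv u) x
        + deriv (fun t : ℝ =>
            u t * ∫ y in (0:ℝ)..1, (2 * Real.cos (2 * Real.pi * (t - y))) * deriv u y) x
      = 0) ∧
    ∃ w : ℝ → ℝ, w ≠ u ∧ ∀ x : ℝ,
      a * deriv (deriv w) x
        + deriv (fun t : ℝ =>
            w t * ∫ y in (0:ℝ)..1, (2 * Real.cos (2 * Real.pi * (t - y))) * deriv w y) x
      = 0 := by
  intro V c u
  have hI1 : 0 < besselI 1 z := besselI_pos z hz 1
  have hI2 : 0 < besselI 2 z := besselI_pos z hz 2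
  have hB : 0 < a * z / besselI 1 z := by positivity
  have hEz : 0 ≤ ∑' j : ℕ, ((z / 2) ^ 2) ^ j / (j.factorial : ℝ) :=
    tsum_nonneg (fun j => by positivity)
  set K : ℝ := (a * z / besselI 1 z) * (∑' j : ℕ, ((z / 2) ^ 2) ^ j / (j.factorial : ℝ)) with hKdef
  have hKpos : 0 ≤ K := by positivity
  have hVval : ∀ m : ℕ, V m = -(a * z / besselI 1 z) * besselI m z := fun m => rfl
  have hVneg : ∀ m : ℕ, V m < 0 := by
    intro m
    rw [hVval]
    have := besselI_pos z hz m
    nlinarith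
  have hVb : ∀ m : ℕ, |V m| ≤ K * ((z / 2) ^ m / (m.factorial : ℝ)) := by
    intro m
    rw [hVval, abs_mul, abs_neg, abs_of_nonneg hB.le,
      abs_of_nonneg (besselI_pos z hz m).le, hKdef]
    calc (a * z / besselI 1 z) * besselI m z
        ≤ (a * z / besselI 1 z) * ((z / 2) ^ m / (m.factorial : ℝ)
            * (∑' j : ℕ, ((z / 2) ^ 2) ^ j / (j.factorial : ℝ))) :=
          mul_le_mul_of_nonneg_left (besselI_le z hz m) hB.le
      _ = (a * z / besselI 1 z) * (∑' j : ℕ, ((z / 2) ^ 2) ^ j / (j.factorial : ℝ))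
            * ((z / 2) ^ m / (m.factorial : ℝ)) := by ring
  have hVd : ∀ j m : ℕ, |V (m+1+j)| ≤ K * (z/2)^j * ((z/2)^(m+1) / ((m+1).factorial : ℝ)) := by
    intro j m
    refine (hVb (m+1+j)).trans ?_
    have hf : ((m+1).factorial : ℝ) ≤ ((m+1+j).factorial : ℝ) := by
      exact_mod_cast Nat.factorial_le (by omega)
    have hf1 : (0:ℝ) < ((m+1).factorial : ℝ) := by exact_mod_cast (m+1).factorial_pos
    have hf2 : (0:ℝ) < ((m+1+j).factorial : ℝ) := by exact_mod_cast (m+1+j).factorial_pos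
    have hpow : (z/2)^(m+1+j) = (z/2)^(m+1) * (z/2)^j := by rw [pow_add]
    rw [hpow]
    have hdiv : (z/2)^(m+1) * (z/2)^j / ((m+1+j).factorial : ℝ)
        ≤ (z/2)^(m+1) * (z/2)^j / ((m+1).factorial : ℝ) :=
      div_le_div_of_nonneg_left (by positivity) hf1 hf
    calc K * ((z/2)^(m+1) * (z/2)^j / ((m+1+j).factorial : ℝ))
        ≤ K * ((z/2)^(m+1) * (z/2)^j / ((m+1).factorial : ℝ)) :=
          mul_le_mul_of_nonneg_left hdiv hKpos
      _ = K * (z/2)^j * ((z/2)^(m+1) / ((m+1).factorial : ℝ)) := by ring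
  have hV1 : V 1 = -(a * z) := by
    rw [hVval]
    field_simp
  have hrec : ∀ m : ℕ, z * (V (m+1) - V (m+3)) = 2*((m:ℝ)+2) * V (m+2) := by
    intro m
    have h := besselI_rec z hz (m+1)
    push_cast at h
    rw [hVval, hVval, hVval]
    have e1 : m+1+2 = m+3 := rfl
    have e2 : m+1+1 = m+2 := rfl
    rw [e1, e2] at h
    linear_combination (-(a * z / besselI 1 z)) * h
  have hm0 : -V 1 - z * V 2 / 2 + z * c = 0 := by
    rw [hV1, hVval]
    show -(-(a*z)) - z * (-(a * z / besselI 1 z) * besselI 2 z) / 2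
        + z * (-a * (z * besselI 2 z / (2 * besselI 1 z) + 1)) = 0
    field_simp
    ring
  -- the four main claims
  refine ⟨?_, ?_, ?_, ?_, ?_⟩
  · -- smoothness (indeed analyticity)
    exact analytic_u hz hKpos hVd c
  · -- periodicity
    intro x
    show c + (∑' m : ℕ, V (m+1) * Real.cos (2*Real.pi*((m:ℝ)+1)*(x+1)))
        = c + ∑' m : ℕ, V (m+1) * Real.cos (2*Real.pi*((m:ℝ)+1)*x)
    congr 1
    apply tsum_congr
    intro m
    congr 1
    have e : 2*Real.pi*((m:ℝ)+1)*(x+1) = 2*Real.pi*((m:ℝ)+1)*x + ((m+1:ℕ):ℝ)*(2*Real.pi) := by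
      push_cast; ring
    rw [e, Real.cos_add_nat_mul_two_pi]
  · -- non-constancy
    rintro ⟨C, hC⟩
    have hsum0 : Summable (fun m : ℕ => V (m+1)) := by
      apply summable_of_bound _ K (z/2) (by positivity) 0
      intro m
      have := hVd 0 m
      simpa using this
    have hsumh : Summable (fun m : ℕ => V (m+1) * Real.cos (2*π*((m:ℝ)+1)*(1/2 : ℝ))) :=
      summable_F hz hKpos hVd (1/2)
    have hfg : ∀ m : ℕ, V (m+1) ≤ V (m+1) * Real.cos (2*π*((m:ℝ)+1)*(1/2 : ℝ)) := by
      intro m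
      have h := mul_le_mul_of_nonpos_left (Real.cos_le_one (2*π*((m:ℝ)+1)*(1/2 : ℝ)))
        (le_of_lt (hVneg (m+1)))
      simpa using h
    have hstrict : V (0+1) < V (0+1) * Real.cos (2*π*(((0:ℕ):ℝ)+1)*(1/2 : ℝ)) := by
      rw [show 2*π*(((0:ℕ):ℝ)+1)*(1/2 : ℝ) = π from by push_cast; ring, Real.cos_pi]
      have := hVneg 1
      simp only [Nat.zero_add]
      linarith
    have hlt : (∑' m : ℕ, V (m+1)) < ∑' m : ℕ, V (m+1) * Real.cos (2*π*((m:ℝ)+1)*(1/2 : ℝ)) :=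
      Summable.tsum_lt_tsum hfg hstrict hsum0 hsumh
    have hu0 : u 0 = c + ∑' m : ℕ, V (m+1) := by
      show c + (∑' m : ℕ, V (m+1) * Real.cos (2*Real.pi*((m:ℝ)+1)*(0:ℝ))) = _
      congr 1
      apply tsum_congr
      intro m
      rw [mul_zero, Real.cos_zero, mul_one]
    have hu12 : u (1/2 : ℝ) = c + ∑' m : ℕ, V (m+1) * Real.cos (2*π*((m:ℝ)+1)*(1/2 : ℝ)) := rfl
    have : u 0 < u (1/2 : ℝ) := by
      rw [hu0, hu12]
      linarith
    rw [hC 0, hC (1/2 : ℝ)] at this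
    exact lt_irrefl _ this
  · -- the PDE
    have hU' : ∀ y : ℝ, HasDerivAt u
        (∑' m : ℕ, V (m+1) * (2*π*((m:ℝ)+1)) * -Real.sin (2*π*((m:ℝ)+1)*y)) y :=
      fun y => (hasDerivAt_sum1 hz hKpos hVd y).const_add c
    have hderiv_u : deriv u
        = fun y => ∑' m : ℕ, V (m+1) * (2*π*((m:ℝ)+1)) * -Real.sin (2*π*((m:ℝ)+1)*y) :=
      funext fun y => (hU' y).deriv
    have hInt : ∀ t : ℝ, (∫ y in (0:ℝ)..1, (2 * Real.cos (2 * Real.pi * (t - y))) * deriv u y)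
        = 2*π*(a*z) * Real.sin (2*π*t) := by
      intro t
      simp only [hderiv_u]
      rw [integral_formula hz hKpos hVd t, show -V 1 = a*z from by rw [hV1]; ring]
    intro x
    have hd2 : deriv (deriv u) x = ∑' m : ℕ,
        V (m+1) * (2*π*((m:ℝ)+1)) * (2*π*((m:ℝ)+1)) * -Real.cos (2*π*((m:ℝ)+1)*x) := by
      rw [hderiv_u]
      exact (hasDerivAt_sum2 hz hKpos hVd x).deriv
    have hfun : (fun t : ℝ =>
          u t * ∫ y in (0:ℝ)..1, (2 * Real.cos (2 * Real.pi * (t - y))) * deriv u y)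
        = fun t : ℝ => u t * (2*π*(a*z) * Real.sin (2*π*t)) :=
      funext fun t => by rw [hInt t]
    rw [hfun, hd2]
    have hprod : HasDerivAt (fun t : ℝ => u t * (2*π*(a*z) * Real.sin (2*π*t)))
        ((∑' m : ℕ, V (m+1) * (2*π*((m:ℝ)+1)) * -Real.sin (2*π*((m:ℝ)+1)*x))
            * (2*π*(a*z) * Real.sin (2*π*x))
          + u x * (2*π*(a*z) * (2*π) * Real.cos (2*π*x))) x :=
      (hU' x).mul (hasDerivAt_sin_lin (2*π*(a*z)) (2*π) x)
    rw [hprod.deriv]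
    rw [show u x = c + ∑' m : ℕ, V (m+1) * Real.cos (2*π*((m:ℝ)+1)*x) from rfl]
    exact final_sum a c x hz hKpos hVd hrec hm0
  · -- another (constant) solution
    refine ⟨fun _ => u 0 + 1, ?_, ?_⟩
    · intro h
      have h0 : u 0 + 1 = u 0 := congrFun h 0
      linarith
    · intro x
      have hdw : deriv (fun _ : ℝ => u 0 + 1) = fun _ : ℝ => (0:ℝ) :=
        funext fun y => deriv_const y (u 0 + 1)
      have h1 : deriv (deriv (fun _ : ℝ => u 0 + 1)) x = 0 := by
        rw [hdw]
        exact deriv_const x 0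
      have h2 : (fun t : ℝ => (fun _ : ℝ => u 0 + 1) t
          * ∫ y in (0:ℝ)..1, (2 * Real.cos (2 * Real.pi * (t - y)))
              * deriv (fun _ : ℝ => u 0 + 1) y) = fun _ : ℝ => (0:ℝ) := by
        funext t
        simp [hdw]
      rw [h1, h2]
      simp
end
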